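/- Suppose each f_i is L-smooth (possibly non-convex), client i performs τ_i ≥ 1 local FedLin steps per round with step size η_i = 1/(26Lτ_i), and there is no compression. Then after T rounds, min_{1 ≤ t ≤ T} ‖∇f(x̄_t)‖² ≤ (52L/T)(f(x̄₁) - f(x̄_{T+1})), where f = (1/m)∑f_i. -/

import Mathlib

/-!
Since the correction term makes the first local step an exact gradient step of `f` at `x̄ₜ`,
client `i` only drifts through the Lipschitz error `∇fᵢ(xᵢ,ℓ) - ∇fᵢ(x̄ₜ)`: after `τᵢ` steps it
sits within `L (τᵢηᵢ)² ‖∇f(x̄ₜ)‖` of the single gradient step `x̄ₜ - τᵢηᵢ ∇f(x̄ₜ)`. The choice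
`ηᵢ = 1/(26Lτᵢ)` makes `τᵢηᵢ = 1/(26L)` the same for all clients, so the average `x̄ₜ₊₁` is a
gradient step of size `1/(26L)` up to an error of relative size `1/26`, and the descent lemma
gives `f(x̄ₜ₊₁) ≤ f(x̄ₜ) - ‖∇f(x̄ₜ)‖²/(52L)`. Summing over the rounds telescopes, and the minimum
is at most the mean.
-/

open Finset InnerProductSpace
open scoped NNReal

section Average

variable {ι α E : Type*} [NormedAddCommGroup E] [NormedSpace ℝ E] {s : Finset ι}

theorem norm_average_le (hs : s.Nonempty) {v : ι → E} {δ : ℝ} (hv : ∀ i ∈ s, ‖v i‖ ≤ δ) :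
    ‖(#s : ℝ)⁻¹ • ∑ i ∈ s, v i‖ ≤ δ := by
  calc ‖(#s : ℝ)⁻¹ • ∑ i ∈ s, v i‖ ≤ (#s : ℝ)⁻¹ * ∑ i ∈ s, ‖v i‖ := by
        rw [norm_smul, Real.norm_of_nonneg (by positivity)]
        gcongr
        exact norm_sum_le _ _
    _ ≤ (#s : ℝ)⁻¹ * (#s * δ) := by
        gcongr
        simpa using sum_le_sum hv
    _ = δ := by field_simp

theorem norm_average_sub_le (hs : s.Nonempty) {y : ι → E} {z : E} {δ : ℝ}
    (hy : ∀ i ∈ s, ‖y i - z‖ ≤ δ) : ‖(#s : ℝ)⁻¹ • ∑ i ∈ s, y i - z‖ ≤ δ := by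
  have hcard : (#s : ℝ) ≠ 0 := by exact_mod_cast hs.card_pos.ne'
  have hz : (#s : ℝ)⁻¹ • ∑ _i ∈ s, z = z := by
    rw [sum_const, ← Nat.cast_smul_eq_nsmul ℝ, smul_smul, inv_mul_cancel₀ hcard, one_smul]
  rw [← hz, ← smul_sub, ← sum_sub_distrib]
  exact norm_average_le hs hy

theorem LipschitzWith.average [PseudoMetricSpace α] (hs : s.Nonempty) {h : ι → α → E} {K : ℝ≥0}
    (hh : ∀ i ∈ s, LipschitzWith K (h i)) :
    LipschitzWith K fun z ↦ (#s : ℝ)⁻¹ • ∑ i ∈ s, h i z := by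
  refine LipschitzWith.of_dist_le_mul fun z w ↦ ?_
  rw [dist_eq_norm, ← smul_sub, ← sum_sub_distrib]
  exact norm_average_le hs fun i hi ↦ by simpa [dist_eq_norm] using (hh i hi).dist_le_mul z w

end Average

theorem exists_le_div_of_le_sub_succ {u g : ℕ → ℝ} {T : ℕ} (hT : 1 ≤ T)
    (h : ∀ t ∈ Icc 1 T, g t ≤ u t - u (t + 1)) :
    ∃ t ∈ Icc 1 T, g t ≤ (u 1 - u (T + 1)) / T := by
  refine exists_le_of_sum_le ⟨1, mem_Icc.2 ⟨le_rfl, hT⟩⟩ ?_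
  calc ∑ t ∈ Icc 1 T, g t ≤ ∑ t ∈ Icc 1 T, (u t - u (t + 1)) := sum_le_sum h
    _ = u 1 - u (T + 1) := by
        simpa [neg_add_eq_sub] using sum_Icc_sub hT (fun t ↦ -u t)
    _ = ∑ _t ∈ Icc 1 T, (u 1 - u (T + 1)) / T := by
        rw [sum_const, Nat.card_Icc, nsmul_eq_mul]; field_simp; simp

section CorrectedSteps

variable {E : Type*} [NormedAddCommGroup E] [NormedSpace ℝ E]

theorem norm_corrected_iterate_sub_le {h : E → E} {K : ℝ≥0} (hh : LipschitzWith K h)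
    {x g : E} {η : ℝ} (hη : 0 ≤ η) {τ : ℕ} (hτ : K * (τ * η) ≤ 1) {y : ℕ → E} (hy0 : y 0 = x)
    (hy : ∀ ℓ < τ, y (ℓ + 1) = y ℓ - η • (h (y ℓ) - h x + g)) :
    ‖y τ - (x - (τ * η) • g)‖ ≤ K * (τ * η) ^ 2 * ‖g‖ := by
  suffices ∀ ℓ ≤ τ, ‖y ℓ - (x - (ℓ * η) • g)‖ ≤ K * (ℓ * η) ^ 2 * ‖g‖ from this τ le_rfl
  intro ℓ
  induction ℓ with
  | zero => simp [hy0]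
  | succ ℓ ih =>
    intro hℓ
    set e := y ℓ - (x - (ℓ * η) • g)
    have he : ‖e‖ ≤ K * (ℓ * η) ^ 2 * ‖g‖ := ih (by omega)
    have hdrift : ‖y ℓ - x‖ ≤ ‖e‖ + ℓ * η * ‖g‖ := by
      calc ‖y ℓ - x‖ = ‖e - (ℓ * η) • g‖ := by simp only [e]; congr 1; abel
        _ ≤ ‖e‖ + ℓ * η * ‖g‖ := by
          grw [norm_sub_le, norm_smul, Real.norm_of_nonneg (by positivity)]
    have hKℓ : K * (ℓ * η) ≤ 1 := le_trans (by gcongr; exact_mod_cast (by omega : ℓ ≤ τ)) hτ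
    have hstep : y (ℓ + 1) - (x - ((ℓ + 1 : ℕ) * η) • g) = e - η • (h (y ℓ) - h x) := by
      rw [hy ℓ hℓ]; push_cast; simp only [e]; module
    rw [hstep]
    have hquad : η * K * (K * (ℓ * η) ^ 2 * ‖g‖) ≤ K * ℓ * η ^ 2 * ‖g‖ := by
      calc η * K * (K * (ℓ * η) ^ 2 * ‖g‖) = K * (ℓ * η) * (K * ℓ * η ^ 2 * ‖g‖) := by ring
        _ ≤ K * ℓ * η ^ 2 * ‖g‖ := mul_le_of_le_one_left (by positivity) hKℓ
    calc ‖e - η • (h (y ℓ) - h x)‖ ≤ ‖e‖ + η * (K * (‖e‖ + ℓ * η * ‖g‖)) := by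
          grw [norm_sub_le, norm_smul, Real.norm_of_nonneg hη, hh.norm_sub_le, hdrift]
      _ ≤ K * (ℓ * η) ^ 2 * ‖g‖ + η * (K * (K * (ℓ * η) ^ 2 * ‖g‖ + ℓ * η * ‖g‖)) := by
          gcongr
      _ ≤ K * ((ℓ + 1 : ℕ) * η) ^ 2 * ‖g‖ := by
          push_cast
          linarith [hquad, (by positivity : (0 : ℝ) ≤ K * η ^ 2 * ‖g‖)]

end CorrectedSteps

section Smooth

variable {E : Type*} [NormedAddCommGroup E] [InnerProductSpace ℝ E] [CompleteSpace E]

theorem hasGradientAt_const_mul_sum {ι : Type*} (s : Finset ι) (c : ℝ) {f : ι → E → ℝ} {z : E}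
    (hf : ∀ i ∈ s, DifferentiableAt ℝ (f i) z) :
    HasGradientAt (fun w ↦ c * ∑ i ∈ s, f i w) (c • ∑ i ∈ s, gradient (f i) z) z := by
  rw [hasGradientAt_iff_hasFDerivAt, map_smul, map_sum]
  exact (HasFDerivAt.fun_sum fun i hi ↦ (hf i hi).hasGradientAt.hasFDerivAt).const_mul c

theorem le_add_inner_gradient_add_mul_norm_sq {φ : E → ℝ} (hφ : Differentiable ℝ φ) {L : ℝ≥0}
    (hL : LipschitzWith L (gradient φ)) (x y : E) :
    φ y ≤ φ x + ⟪gradient φ x, y - x⟫_ℝ + L * ‖y - x‖ ^ 2 := by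
  set g := gradient φ x
  -- mean value inequality for `φ - ⟪g, ·⟫`, whose derivative vanishes at `x`
  have hderiv : ∀ z, HasFDerivAt (fun w ↦ φ w - toDual ℝ E g w)
      (toDual ℝ E (gradient φ z - g)) z := fun z ↦ by
    rw [map_sub]
    exact (hφ z).hasGradientAt.hasFDerivAt.sub (toDual ℝ E g).hasFDerivAt
  have hbound : ∀ z ∈ segment ℝ x y, ‖toDual ℝ E (gradient φ z - g)‖ ≤ L * ‖y - x‖ := by
    intro z hz
    rw [LinearIsometryEquiv.norm_map]
    grw [hL.norm_sub_le, norm_sub_le_of_mem_segment hz]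
  have hmvt := (convex_segment x y).norm_image_sub_le_of_norm_hasFDerivWithin_le
    (fun z _ ↦ (hderiv z).hasFDerivWithinAt) hbound (left_mem_segment ℝ x y)
    (right_mem_segment ℝ x y)
  simp only [toDual_apply_apply] at hmvt
  rw [inner_sub_right, sq, ← mul_assoc]
  linarith [(le_abs_self _).trans hmvt]

theorem le_sub_of_norm_sub_gradient_step_le {φ : E → ℝ} (hφ : Differentiable ℝ φ) {L : ℝ≥0}
    (hL : LipschitzWith L (gradient φ)) {x x' : E} {e : ℝ} (he : 0 ≤ e) (hLe : L * e ≤ 1 / 8)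
    (hx' : ‖x' - (x - e • gradient φ x)‖ ≤ L * e ^ 2 * ‖gradient φ x‖) :
    φ x' ≤ φ x - e / 2 * ‖gradient φ x‖ ^ 2 := by
  set g := gradient φ x
  set r := x' - (x - e • g)
  have hr : ‖r‖ ≤ e * ‖g‖ / 8 := by
    calc ‖r‖ ≤ (L * e) * (e * ‖g‖) := by linarith
      _ ≤ 1 / 8 * (e * ‖g‖) := by gcongr
      _ = e * ‖g‖ / 8 := by ring
  have hdisp : x' - x = r - e • g := by simp only [r]; abel
  have hinner : ⟪g, x' - x⟫_ℝ ≤ ‖g‖ * ‖r‖ - e * ‖g‖ ^ 2 := by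
    rw [hdisp, inner_sub_right, real_inner_smul_right, real_inner_self_eq_norm_sq]
    linarith [real_inner_le_norm g r]
  have hnorm : L * ‖x' - x‖ ^ 2 ≤ 81 / 512 * e * ‖g‖ ^ 2 := by
    calc L * ‖x' - x‖ ^ 2 ≤ L * (9 / 8 * (e * ‖g‖)) ^ 2 := by
          rw [hdisp]
          grw [norm_sub_le, norm_smul, Real.norm_of_nonneg he, hr]
          linarith
      _ = 81 / 64 * (L * e) * (e * ‖g‖ ^ 2) := by ring
      _ ≤ 81 / 64 * (1 / 8) * (e * ‖g‖ ^ 2) := by gcongr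
      _ = 81 / 512 * e * ‖g‖ ^ 2 := by ring
  have hcross : ‖g‖ * ‖r‖ ≤ e * ‖g‖ ^ 2 / 8 := by
    calc ‖g‖ * ‖r‖ ≤ ‖g‖ * (e * ‖g‖ / 8) := by gcongr
      _ = e * ‖g‖ ^ 2 / 8 := by ring
  linarith [le_add_inner_gradient_add_mul_norm_sq hφ hL x x',
    (by positivity : 0 ≤ e * ‖g‖ ^ 2)]

theorem le_sub_of_average_corrected_iterates {ι : Type*} {s : Finset ι} (hs : s.Nonempty)
    {φ : E → ℝ} (hφ : Differentiable ℝ φ) {L : ℝ≥0} (hL : LipschitzWith L (gradient φ))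
    {h : ι → E → E} (hh : ∀ i ∈ s, LipschitzWith L (h i)) {τ : ι → ℕ} {η : ι → ℝ} {e : ℝ}
    (he : 0 ≤ e) (hLe : L * e ≤ 1 / 8) (hη : ∀ i ∈ s, 0 ≤ η i) (hτη : ∀ i ∈ s, τ i * η i = e)
    {x : E} {y : ι → ℕ → E} (hy0 : ∀ i ∈ s, y i 0 = x)
    (hy : ∀ i ∈ s, ∀ ℓ < τ i,
      y i (ℓ + 1) = y i ℓ - η i • (h i (y i ℓ) - h i x + gradient φ x)) :
    φ ((#s : ℝ)⁻¹ • ∑ i ∈ s, y i (τ i)) ≤ φ x - e / 2 * ‖gradient φ x‖ ^ 2 := by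
  have hlocal : ∀ i ∈ s, ‖y i (τ i) - (x - e • gradient φ x)‖ ≤ L * e ^ 2 * ‖gradient φ x‖ :=
    fun i hi ↦ by
      simpa only [hτη i hi] using norm_corrected_iterate_sub_le (hh i hi) (hη i hi)
        (by rw [hτη i hi]; linarith) (hy0 i hi) (hy i hi)
  exact le_sub_of_norm_sub_gradient_step_le hφ hL he hLe (norm_average_sub_le hs hlocal)

end Smooth

/-- Theorem 5 (non-convex case with systems heterogeneity): FedLin with
client-specific numbers of local steps `τᵢ ≥ 1` and step sizes `ηᵢ = 1/(26Lτᵢ)`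
drives the minimum gradient norm to zero at rate `O(1/T)`. -/
theorem fedlin_convergence_nonconvex_systems_heterogeneity {d m : ℕ} (hm : 0 < m)
    (f : Fin m → EuclideanSpace ℝ (Fin d) → ℝ)
    (F : EuclideanSpace ℝ (Fin d) → ℝ)
    (hF : ∀ z, F z = (1 / (m : ℝ)) * ∑ i, f i z)
    (L : ℝ) (hL : 0 < L)
    (hdiff : ∀ i, Differentiable ℝ (f i))
    (hsmooth : ∀ i, LipschitzWith L.toNNReal (gradient (f i)))
    (τ : Fin m → ℕ) (hτ : ∀ i, 1 ≤ τ i)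
    (η : Fin m → ℝ) (hη : ∀ i, η i = 1 / (26 * L * (τ i : ℝ)))
    (xbar : ℕ → EuclideanSpace ℝ (Fin d))
    (x : ℕ → Fin m → ℕ → EuclideanSpace ℝ (Fin d))
    (hx0 : ∀ t, 1 ≤ t → ∀ i, x t i 0 = xbar t)
    (hrec : ∀ t, 1 ≤ t → ∀ i, ∀ ℓ < τ i, x t i (ℓ + 1) =
      x t i ℓ - η i • (gradient (f i) (x t i ℓ) - gradient (f i) (xbar t)
        + gradient F (xbar t)))
    (havg : ∀ t, 1 ≤ t → xbar (t + 1) = (1 / (m : ℝ)) • ∑ i, x t i (τ i))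
    (T : ℕ) (hT : 1 ≤ T) :
    ∃ t, 1 ≤ t ∧ t ≤ T ∧
      ‖gradient F (xbar t)‖ ^ 2 ≤ (52 * L / (T : ℝ)) * (F (xbar 1) - F (xbar (T + 1))) := by
  have huniv : (univ : Finset (Fin m)).Nonempty := univ_nonempty_iff.2 ⟨⟨0, hm⟩⟩
  have hcard : ((#(univ : Finset (Fin m)) : ℕ) : ℝ)⁻¹ = 1 / m := by simp
  have hgradF : ∀ z, HasGradientAt F ((1 / (m : ℝ)) • ∑ i, gradient (f i) z) z := fun z ↦
    funext hF ▸ hasGradientAt_const_mul_sum univ _ fun i _ ↦ hdiff i z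
  have hFsmooth : LipschitzWith L.toNNReal (gradient F) := by
    have := LipschitzWith.average huniv fun i _ ↦ hsmooth i
    rwa [hcard, ← funext fun z ↦ (hgradF z).gradient] at this
  have hLe : (L.toNNReal : ℝ) * (1 / (26 * L)) = 1 / 26 := by
    rw [Real.coe_toNNReal _ hL.le]; field_simp
  have hround : ∀ t, 1 ≤ t →
      ‖gradient F (xbar t)‖ ^ 2 / (52 * L) ≤ F (xbar t) - F (xbar (t + 1)) := by
    intro t ht
    have hdesc := le_sub_of_average_corrected_iterates (e := 1 / (26 * L)) huniv
      (fun z ↦ (hgradF z).differentiableAt) hFsmooth (fun i _ ↦ hsmooth i) (by positivity)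
      (by rw [hLe]; norm_num) (fun i _ ↦ by rw [hη]; positivity)
      (fun i _ ↦ by have := hτ i; rw [hη]; field_simp) (fun i _ ↦ hx0 t ht i)
      (fun i _ ↦ hrec t ht i)
    rw [hcard, ← havg t ht] at hdesc
    linarith [show ‖gradient F (xbar t)‖ ^ 2 / (52 * L) =
      1 / (26 * L) / 2 * ‖gradient F (xbar t)‖ ^ 2 by ring]
  obtain ⟨t, ht, hle⟩ := exists_le_div_of_le_sub_succ hT fun t ht ↦ hround t (mem_Icc.1 ht).1
  refine ⟨t, (mem_Icc.1 ht).1, (mem_Icc.1 ht).2, ?_⟩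
  rw [div_le_div_iff₀ (by positivity) (by positivity)] at hle
  rw [div_mul_eq_mul_div, le_div_iff₀ (by positivity)]
  linarith
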